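/- Let B be an n×n real matrix and let μ₊ be a real eigenvalue of B with 0 < μ₊ < 1 that is the largest nonnegative real eigenvalue of B. Then for every β ∈ ℝ the spectral radius of T(B,β) satisfies ρ(T(B,β)) ≥ 1 − √(1−μ₊); and if ρ(T(B,β)) = 1 − √(1−μ₊) for some β ∈ ℝ, then β = (1−√(1−μ₊))/(1+√(1−μ₊)). -/

import Mathlib

/-!
If `B v = μ v`, then `(λ v, v)` is an eigenvector of `T(B, β)` for each root `λ` of
`λ² = (1 + β) μ λ - β μ`. Write `μ₊ = 1 - s²` with `0 < s < 1` and `β* = (1 - s) / (1 + s)`; the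
quadratic evaluated at `1 - s` equals `s (1 - s) (β (1 + s) - (1 - s))`. For `β < β*` this is
negative, so a real root exceeds `1 - s`; for `β = β*` the root is `1 - s` itself; for `β > β*`
the product of the two roots, `β μ₊`, exceeds `(1 - s)²`, so one root has modulus above `1 - s`.
-/

/-- `lam : ℂ` is an eigenvalue (over `ℂ`) of the square real matrix `A`. -/
def IsCEigenvalue {n : Type*} [Fintype n] (A : Matrix n n ℝ) (lam : ℂ) : Prop :=
  ∃ v : n → ℂ, v ≠ 0 ∧ (A.map (Complex.ofReal)).mulVec v = lam • v

/-- The spectral radius of a square real matrix: the maximum modulus of its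
eigenvalues over `ℂ`. -/
noncomputable def specRad {n : Type*} [Fintype n] (A : Matrix n n ℝ) : ℝ :=
  sSup {r : ℝ | ∃ lam : ℂ, IsCEigenvalue A lam ∧ r = ‖lam‖}

/-- The block matrix `T(M,β) = [[(1+β)M, −βM],[I, 0]]` (Jacobian of sAA(1)). -/
noncomputable def TAA {n : ℕ} (M : Matrix (Fin n) (Fin n) ℝ) (β : ℝ) :
    Matrix (Fin n ⊕ Fin n) (Fin n ⊕ Fin n) ℝ :=
  Matrix.fromBlocks ((1 + β) • M) ((-β) • M) (1 : Matrix (Fin n) (Fin n) ℝ) 0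

open scoped Matrix

section SpectralRadius

variable {n : Type*} [Fintype n] {A : Matrix n n ℝ} {lam : ℂ}

lemma IsCEigenvalue.mem_spectrum [DecidableEq n] (h : IsCEigenvalue A lam) :
    lam ∈ spectrum ℂ (A.map Complex.ofReal) := by
  obtain ⟨v, hv, hAv⟩ := h
  rw [← Matrix.spectrum_toLin', ← Module.End.hasEigenvalue_iff_mem_spectrum]
  exact Module.End.hasEigenvalue_of_hasEigenvector
    ⟨Module.End.mem_eigenspace_iff.mpr (by rwa [Matrix.toLin'_apply]), hv⟩

lemma IsCEigenvalue.norm_le_specRad (h : IsCEigenvalue A lam) : ‖lam‖ ≤ specRad A := by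
  classical
  refine le_csSup ?_ ⟨lam, h, rfl⟩
  refine ((Matrix.finite_spectrum (A.map Complex.ofReal)).image norm).bddAbove.mono ?_
  rintro _ ⟨μ, hμ, rfl⟩
  exact ⟨μ, hμ.mem_spectrum, rfl⟩

end SpectralRadius

lemma Matrix.fromBlocks_mulVec_elim_eq_smul {R m : Type*} [CommRing R] [Fintype m] [DecidableEq m]
    (M : Matrix m m R) {β μ lam : R} {u : m → R} (hMu : M *ᵥ u = μ • u)
    (hlam : lam ^ 2 = (1 + β) * μ * lam - β * μ) :
    fromBlocks ((1 + β) • M) ((-β) • M) 1 0 *ᵥ Sum.elim (lam • u) u =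
      lam • Sum.elim (lam • u) u := by
  have hfirst : ((1 + β) • M) *ᵥ (lam • u) + ((-β) • M) *ᵥ u = lam • lam • u := by
    simp only [smul_mulVec, mulVec_smul, hMu, smul_smul, ← add_smul]
    congr 1
    linear_combination -hlam
  rw [fromBlocks_mulVec, Sum.elim_comp_inl, Sum.elim_comp_inr, hfirst]
  ext (i | i) <;> simp

lemma TAA_map_ofReal {n : ℕ} (B : Matrix (Fin n) (Fin n) ℝ) (β : ℝ) :
    (TAA B β).map Complex.ofReal =
      Matrix.fromBlocks ((1 + (β : ℂ)) • B.map Complex.ofReal) ((-(β : ℂ)) • B.map Complex.ofReal)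
        1 0 := by
  ext (i | i) (j | j) <;> simp [TAA, Matrix.one_apply, apply_ite]

lemma isCEigenvalue_TAA {n : ℕ} {B : Matrix (Fin n) (Fin n) ℝ} {β μ : ℝ} {v : Fin n → ℝ}
    (hv : v ≠ 0) (hBv : B *ᵥ v = μ • v) {lam : ℂ}
    (hlam : lam ^ 2 = (1 + β) * μ * lam - β * μ) :
    IsCEigenvalue (TAA B β) lam := by
  have hBu : B.map Complex.ofReal *ᵥ (Complex.ofReal ∘ v) = (μ : ℂ) • (Complex.ofReal ∘ v) := by
    ext i
    change (B.map Complex.ofRealHom *ᵥ Complex.ofRealHom ∘ v) i = _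
    rw [← RingHom.map_mulVec, hBv]
    simp
  refine ⟨Sum.elim (lam • (Complex.ofReal ∘ v)) (Complex.ofReal ∘ v), fun h => hv ?_, ?_⟩
  · ext i
    simpa using congrFun h (Sum.inr i)
  · rw [TAA_map_ofReal]
    exact Matrix.fromBlocks_mulVec_elim_eq_smul _ hBu hlam

lemma Complex.exists_quadratic_root_norm_sq_ge (a c : ℂ) :
    ∃ z : ℂ, z ^ 2 = a * z - c ∧ ‖c‖ ≤ ‖z‖ ^ 2 := by
  obtain ⟨d, hd⟩ := IsAlgClosed.exists_pow_nat_eq (a ^ 2 - 4 * c) two_pos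
  -- the two roots `(a ± d) / 2` multiply to `c`, so the larger one has `‖z‖² ≥ ‖c‖`
  have hprod : ‖c‖ = ‖(a + d) / 2‖ * ‖(a - d) / 2‖ := by
    rw [← norm_mul]
    congr 1
    linear_combination hd / 4
  rcases le_total ‖(a - d) / 2‖ ‖(a + d) / 2‖ with h | h
  · exact ⟨(a + d) / 2, by linear_combination hd / 4, by nlinarith [norm_nonneg ((a + d) / 2)]⟩
  · exact ⟨(a - d) / 2, by linear_combination hd / 4, by nlinarith [norm_nonneg ((a - d) / 2)]⟩

lemma Real.exists_quadratic_root_gt_of_eval_neg {a c x : ℝ} (h : x ^ 2 - a * x + c < 0) :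
    ∃ r : ℝ, r ^ 2 = a * r - c ∧ x < r := by
  have hD : (2 * x - a) ^ 2 < a ^ 2 - 4 * c := by linarith
  have hsq := Real.sq_sqrt (x := a ^ 2 - 4 * c) (by linarith [sq_nonneg (2 * x - a)])
  refine ⟨(a + √(a ^ 2 - 4 * c)) / 2, by linear_combination hsq / 4, ?_⟩
  linarith [Real.lt_sqrt_of_sq_lt hD]

lemma exists_quadratic_root_norm_ge_one_sub_sqrt {μ : ℝ} (hμ0 : 0 < μ) (hμ1 : μ < 1) (β : ℝ) :
    ∃ lam : ℂ, lam ^ 2 = (1 + β) * μ * lam - β * μ ∧ 1 - √(1 - μ) ≤ ‖lam‖ ∧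
      (β ≠ (1 - √(1 - μ)) / (1 + √(1 - μ)) → 1 - √(1 - μ) < ‖lam‖) := by
  set s := √(1 - μ)
  have hs0 : 0 < s := Real.sqrt_pos.mpr (by linarith)
  have hμ : μ = 1 - s ^ 2 := by rw [Real.sq_sqrt (by linarith)]; ring
  have hs1 : s < 1 := by nlinarith
  have heval : (1 - s) ^ 2 - (1 + β) * μ * (1 - s) + β * μ =
      s * (1 - s) * (β * (1 + s) - (1 - s)) := by
    rw [hμ]; ring
  have hpos : 0 < s * (1 - s) := mul_pos hs0 (by linarith)
  rcases lt_trichotomy β ((1 - s) / (1 + s)) with hlt | rfl | hgt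
  · rw [lt_div_iff₀ (by linarith)] at hlt
    obtain ⟨r, hr, hsr⟩ := Real.exists_quadratic_root_gt_of_eval_neg (x := 1 - s) (a := (1 + β) * μ)
      (c := β * μ) (by rw [heval]; nlinarith)
    have hnorm : ‖(r : ℂ)‖ = r := by rw [Complex.norm_real, Real.norm_of_nonneg (by linarith)]
    exact ⟨r, by exact_mod_cast hr, by rw [hnorm]; exact hsr.le, fun _ => by rw [hnorm]; exact hsr⟩
  · refine ⟨((1 - s : ℝ) : ℂ), ?_, by rw [Complex.norm_real, Real.norm_of_nonneg (by linarith)],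
      fun h => absurd rfl h⟩
    have : (1 - s) ^ 2 = (1 + (1 - s) / (1 + s)) * μ * (1 - s) - (1 - s) / (1 + s) * μ := by
      rw [hμ]; field_simp; ring
    exact_mod_cast this
  · rw [div_lt_iff₀ (by linarith)] at hgt
    obtain ⟨z, hz, hcz⟩ := Complex.exists_quadratic_root_norm_sq_ge ((1 + β) * μ) (β * μ)
    have hlt : (1 - s) ^ 2 < ‖z‖ ^ 2 := by
      calc (1 - s) ^ 2 < β * μ := by rw [hμ]; nlinarith
        _ ≤ ‖(β : ℂ) * μ‖ := by
          rw [← Complex.ofReal_mul, Complex.norm_real]; exact Real.le_norm_self _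
        _ ≤ ‖z‖ ^ 2 := hcz
    have hgt' := lt_of_pow_lt_pow_left₀ 2 (norm_nonneg z) hlt
    exact ⟨z, hz, hgt'.le, fun _ => hgt'⟩

theorem stmt12_general (n : ℕ) (B : Matrix (Fin n) (Fin n) ℝ) (μp : ℝ)
    (h0 : 0 < μp) (h1 : μp < 1)
    (heig : ∃ v : Fin n → ℝ, v ≠ 0 ∧ B.mulVec v = μp • v) :
    (∀ β : ℝ, 1 - Real.sqrt (1 - μp) ≤ specRad (TAA B β)) ∧
    (∀ β : ℝ, specRad (TAA B β) = 1 - Real.sqrt (1 - μp) →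
      β = (1 - Real.sqrt (1 - μp)) / (1 + Real.sqrt (1 - μp))) := by
  obtain ⟨v, hv, hBv⟩ := heig
  have hroot (β : ℝ) := exists_quadratic_root_norm_ge_one_sub_sqrt h0 h1 β
  refine ⟨fun β => ?_, fun β hρ => ?_⟩
  · obtain ⟨lam, hlam, hge, -⟩ := hroot β
    exact hge.trans (isCEigenvalue_TAA hv hBv hlam).norm_le_specRad
  · by_contra hne
    obtain ⟨lam, hlam, -, hgt⟩ := hroot β
    have hle := (isCEigenvalue_TAA hv hBv hlam).norm_le_specRad
    linarith [hgt hne]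

theorem stmt12 (n : ℕ) (B : Matrix (Fin n) (Fin n) ℝ) (μp : ℝ)
    (h0 : 0 < μp) (h1 : μp < 1)
    (heig : ∃ v : Fin n → ℝ, v ≠ 0 ∧ B.mulVec v = μp • v)
    (hmax : ∀ μ : ℝ, 0 ≤ μ → (∃ v : Fin n → ℝ, v ≠ 0 ∧ B.mulVec v = μ • v) → μ ≤ μp) :
    (∀ β : ℝ, 1 - Real.sqrt (1 - μp) ≤ specRad (TAA B β)) ∧
    (∀ β : ℝ, specRad (TAA B β) = 1 - Real.sqrt (1 - μp) →
      β = (1 - Real.sqrt (1 - μp)) / (1 + Real.sqrt (1 - μp))) :=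
  stmt12_general n B μp h0 h1 heig
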